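/- The kernel of ψ is the principal ideal generated by Z³ − X·Y², and the image of ψ is the subalgebra B of ℂ[r, s, s⁻¹] generated by r, r·s⁻¹, r·s²; consequently B ≅ ℂ[X,Y,Z]/(Z³ − XY²), the coordinate ring of the cubic ruled surface z³ = x y². -/

import Mathlib

/-- The ring `ℂ[r, s, s⁻¹]` of polynomials in `r` that are Laurent polynomials
in `s`, realized as the monoid algebra of `ℕ × ℤ` over `ℂ`. -/
abbrev PolyLaurent : Type := AddMonoidAlgebra ℂ (ℕ × ℤ)

/-- The monomial `rⁿ sᵐ` in `ℂ[r, s, s⁻¹]`. -/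
noncomputable def mono (n : ℕ) (m : ℤ) : PolyLaurent :=
  AddMonoidAlgebra.single (n, m) 1

/-- The `ℂ`-algebra homomorphism `ψ : ℂ[X, Y, Z] → ℂ[r, s, s⁻¹]` determined by
`ψ(X) = r·s²`, `ψ(Y) = r·s⁻¹`, `ψ(Z) = r`. -/
noncomputable def psi : MvPolynomial (Fin 3) ℂ →ₐ[ℂ] PolyLaurent :=
  MvPolynomial.aeval ![mono 1 2, mono 1 (-1), mono 1 0]

/-- The principal ideal of `ℂ[X, Y, Z]` generated by `Z³ − X·Y²`. -/
noncomputable def ruledIdeal : Ideal (MvPolynomial (Fin 3) ℂ) :=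
  Ideal.span {MvPolynomial.X 2 ^ 3 - MvPolynomial.X 0 * MvPolynomial.X 1 ^ 2}

/-!
`ψ` sends the monomial `X^a Y^b Z^c` to the single monomial `r^(a+b+c) s^(2a-b)`, so it is
`mapDomain` along this weight map. Modulo `Z³ − XY²` every monomial can trade each `Z³` for
`XY²` without changing its weight, until its `Z`-degree is below `3`; on such reduced monomials
the weight `(a+b+c, 2a-b)` determines `(a, b, c)`. Hence a polynomial killed by `ψ` is congruent
to a reduced polynomial killed by `ψ`, which must be `0`.
-/

namespace MvPolynomial

variable {σ R : Type*} [CommRing R]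

theorem sub_mapDomain_mem {I : Ideal (MvPolynomial σ R)} {g : (σ →₀ ℕ) → σ →₀ ℕ}
    (hg : ∀ m, monomial m (1 : R) - monomial (g m) 1 ∈ I) (p : MvPolynomial σ R) :
    p - AddMonoidAlgebra.mapDomain g p ∈ I := by
  induction p using MvPolynomial.induction_on' with
  | monomial m c =>
    have := I.mul_mem_left (C c) (hg m)
    rwa [mul_sub, C_mul_monomial, C_mul_monomial, mul_one, ← single_eq_monomial (g m),
      ← AddMonoidAlgebra.mapDomain_single, single_eq_monomial] at this
  | add p q hp hq =>
    rw [AddMonoidAlgebra.mapDomain_add, add_sub_add_comm]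
    exact I.add_mem hp hq

theorem ker_eq_of_reduction {M : Type*} [AddMonoid M]
    {f : MvPolynomial σ R →+* AddMonoidAlgebra R M}
    {w : (σ →₀ ℕ) → M} (hf : ∀ p, f p = AddMonoidAlgebra.mapDomain w p)
    {I : Ideal (MvPolynomial σ R)} (hI : I ≤ RingHom.ker f) {g : (σ →₀ ℕ) → σ →₀ ℕ}
    (hg : ∀ m, monomial m (1 : R) - monomial (g m) 1 ∈ I) (hwg : ∀ m, w (g m) = w m)
    (hw : Set.InjOn w (Set.range g)) : RingHom.ker f = I := by
  refine le_antisymm (fun p hp => ?_) hI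
  suffices AddMonoidAlgebra.mapDomain g p = 0 by simpa [this] using sub_mapDomain_mem hg p
  have hfg : f (AddMonoidAlgebra.mapDomain g p) = f p := by
    simp only [hf]
    ext
    simp only [AddMonoidAlgebra.coeff_mapDomain, ← Finsupp.mapDomain_comp]
    rw [show w ∘ g = w from _root_.funext hwg]
  have hsupp : ↑(AddMonoidAlgebra.mapDomain g p).coeff.support ⊆ Set.range g := by
    classical
    refine (Finset.coe_subset.2 Finsupp.mapDomain_support).trans ?_
    simp
  rw [RingHom.mem_ker, ← hfg, hf, ← AddMonoidAlgebra.coeff_eq_zero] at hp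
  rw [← AddMonoidAlgebra.coeff_eq_zero]
  exact Finsupp.mapDomain_injOn _ hw hsupp (by simp) (by simpa using hp)

end MvPolynomial

open MvPolynomial

def weight (m : Fin 3 →₀ ℕ) : ℕ × ℤ := (m 0 + m 1 + m 2, 2 * (m 0 : ℤ) - m 1)

theorem psi_monomial (m : Fin 3 →₀ ℕ) (c : ℂ) :
    psi (monomial m c) = AddMonoidAlgebra.single (weight m) c := by
  simp [psi, aeval_monomial, Finsupp.prod_fintype, Fin.prod_univ_three, mono,
    AddMonoidAlgebra.single_pow, AddMonoidAlgebra.single_mul_single, weight, mul_comm, add_comm,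
    sub_eq_add_neg]

theorem psi_eq_mapDomain (p : MvPolynomial (Fin 3) ℂ) :
    psi p = AddMonoidAlgebra.mapDomain weight p := by
  induction p using MvPolynomial.induction_on' with
  | monomial m c => rw [psi_monomial, ← single_eq_monomial, AddMonoidAlgebra.mapDomain_single]
  | add p q hp hq => rw [map_add, hp, hq, AddMonoidAlgebra.mapDomain_add]

noncomputable def reduceExp (m : Fin 3 →₀ ℕ) : Fin 3 →₀ ℕ :=
  m.update 2 (m 2 % 3) + (m 2 / 3) • (Finsupp.single 0 1 + Finsupp.single 1 2)

theorem reduceExp_apply (m : Fin 3 →₀ ℕ) :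
    reduceExp m 0 = m 0 + m 2 / 3 ∧ reduceExp m 1 = m 1 + 2 * (m 2 / 3) ∧
      reduceExp m 2 = m 2 % 3 := by
  refine ⟨?_, ?_, ?_⟩ <;> simp [reduceExp, mul_comm]

theorem weight_reduceExp (m : Fin 3 →₀ ℕ) : weight (reduceExp m) = weight m := by
  obtain ⟨h0, h1, h2⟩ := reduceExp_apply m
  have := Nat.div_add_mod (m 2) 3
  rw [weight, weight, h0, h1, h2, Prod.mk.injEq]
  constructor <;> push_cast <;> omega

theorem weight_injOn_range_reduceExp : Set.InjOn weight (Set.range reduceExp) := by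
  rintro _ ⟨m, rfl⟩ _ ⟨m', rfl⟩ h
  obtain ⟨h0, h1, h2⟩ := reduceExp_apply m
  obtain ⟨h0', h1', h2'⟩ := reduceExp_apply m'
  have := Nat.mod_lt (m 2) three_pos
  have := Nat.mod_lt (m' 2) three_pos
  rw [weight, weight, Prod.mk.injEq] at h
  ext i
  fin_cases i <;> simp only [Fin.zero_eta, Fin.mk_one, Fin.reduceFinMk] <;> omega

theorem monomial_sub_monomial_mem_ruledIdeal (n : Fin 3 →₀ ℕ) (k : ℕ) :
    monomial (n + k • Finsupp.single 2 3) (1 : ℂ) -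
      monomial (n + k • (Finsupp.single 0 1 + Finsupp.single 1 2)) 1 ∈ ruledIdeal := by
  have h : monomial (n + k • Finsupp.single 2 3) (1 : ℂ) -
      monomial (n + k • (Finsupp.single 0 1 + Finsupp.single 1 2)) 1 =
        monomial n 1 * ((X 2 ^ 3) ^ k - (X 0 * X 1 ^ 2) ^ k) := by
    simp only [X, monomial_mul, monomial_pow, mul_sub, one_pow, mul_one,
      Finsupp.smul_single, smul_eq_mul]
  rw [h]
  exact Ideal.mul_mem_left _ _ (Ideal.mem_span_singleton.2 (sub_dvd_pow_sub_pow _ _ _))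

theorem monomial_sub_monomial_reduceExp_mem (m : Fin 3 →₀ ℕ) :
    monomial m (1 : ℂ) - monomial (reduceExp m) 1 ∈ ruledIdeal := by
  have hm : m.update 2 (m 2 % 3) + (m 2 / 3) • Finsupp.single 2 3 = m := by
    ext i
    fin_cases i <;> simp [Nat.mod_add_div']
  have := monomial_sub_monomial_mem_ruledIdeal (m.update 2 (m 2 % 3)) (m 2 / 3)
  rwa [hm] at this

theorem ruledIdeal_le_ker_psi :
    ruledIdeal ≤ RingHom.ker (psi : MvPolynomial (Fin 3) ℂ →+* PolyLaurent) := by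
  rw [ruledIdeal, Ideal.span_le, Set.singleton_subset_iff, SetLike.mem_coe, RingHom.mem_ker]
  simp [psi, mono, AddMonoidAlgebra.single_pow, AddMonoidAlgebra.single_mul_single]

theorem ker_psi : RingHom.ker (psi : MvPolynomial (Fin 3) ℂ →+* PolyLaurent) = ruledIdeal :=
  ker_eq_of_reduction psi_eq_mapDomain ruledIdeal_le_ker_psi monomial_sub_monomial_reduceExp_mem
    weight_reduceExp weight_injOn_range_reduceExp

theorem range_psi : psi.range = Algebra.adjoin ℂ {mono 1 0, mono 1 (-1), mono 1 2} := by
  rw [psi, ← Algebra.adjoin_range_eq_range_aeval]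
  congr 1
  ext
  simp only [Matrix.range_cons, Matrix.range_empty, Set.union_empty, Set.mem_union,
    Set.mem_insert_iff, Set.mem_singleton_iff]
  tauto

theorem ruled_surface_coordinate_ring :
    RingHom.ker (psi : MvPolynomial (Fin 3) ℂ →+* PolyLaurent) = ruledIdeal ∧
    psi.range = Algebra.adjoin ℂ {mono 1 0, mono 1 (-1), mono 1 2} ∧
    Nonempty
      ((MvPolynomial (Fin 3) ℂ ⧸ ruledIdeal)
        ≃ₐ[ℂ] Algebra.adjoin ℂ {mono 1 0, mono 1 (-1), mono 1 2}) :=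
  ⟨ker_psi, range_psi, ⟨(Ideal.quotientEquivAlgOfEq ℂ ker_psi.symm).trans
    ((Ideal.quotientKerEquivRange psi).trans (Subalgebra.equivOfEq _ _ range_psi))⟩⟩
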